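/- Let T be a tree with diameter 5, and let u, v be adjacent vertices of T such that u is a peripheral vertex of T (i.e., the eccentricity of u equals 5). Then V(T̄) is contained in the convex hull of {ū, v̄} in the complementary prism TT̄. -/

import Mathlib

open SimpleGraph

/-- Adjacency of the complementary prism: copies of `G` and `Gᶜ` joined by a perfect matching. -/
def prismAdj {V : Type*} (G : SimpleGraph V) : V ⊕ V → V ⊕ V → Prop
  | Sum.inl a, Sum.inl b => G.Adj a b
  | Sum.inr a, Sum.inr b => Gᶜ.Adj a b
  | Sum.inl a, Sum.inr b => a = b
  | Sum.inr a, Sum.inl b => a = b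

/-- The complementary prism `G G̅` of a graph `G`. -/
def compPrism {V : Type*} (G : SimpleGraph V) : SimpleGraph (V ⊕ V) where
  Adj := prismAdj G
  symm := by
    refine ⟨?_⟩
    rintro (a | a) (b | b) h
    · exact h.symm
    · exact h.symm
    · exact h.symm
    · exact h.symm
  loopless := by
    refine ⟨?_⟩
    rintro (a | a) h
    · exact G.loopless.irrefl a h
    · exact Gᶜ.loopless.irrefl a h

/-- `w` lies on some shortest `u,v`-path (geodesic) of `H`. -/
def inInterval {V : Type*} (H : SimpleGraph V) (u v w : V) : Prop :=
  ∃ p : H.Walk u v, p.IsPath ∧ p.length = H.dist u v ∧ w ∈ p.support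

/-- A set of vertices is geodesically convex. -/
def IsGeoConvex {V : Type*} (H : SimpleGraph V) (S : Set V) : Prop :=
  ∀ u ∈ S, ∀ v ∈ S, ∀ w, inInterval H u v w → w ∈ S

/-- The geodesic convex hull: the smallest convex set containing `S`. -/
def geoHull {V : Type*} (H : SimpleGraph V) (S : Set V) : Set V :=
  ⋂₀ {C | IsGeoConvex H C ∧ S ⊆ C}

/-- The convexity number: maximum cardinality of a proper convex set. -/
noncomputable def convexityNumber {V : Type*} (H : SimpleGraph V) : ℕ :=
  sSup {n | ∃ S : Set V, IsGeoConvex H S ∧ S ≠ Set.univ ∧ S.ncard = n}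

/-- The diameter of a graph. -/
noncomputable def graphDiam {V : Type*} (H : SimpleGraph V) : ℕ :=
  sSup {d | ∃ u v : V, H.dist u v = d}

/-- The eccentricity of a vertex. -/
noncomputable def graphEcc {V : Type*} (H : SimpleGraph V) (u : V) : ℕ :=
  sSup {d | ∃ v : V, H.dist u v = d}

/-- The degree of a vertex. -/
noncomputable def vdeg {V : Type*} (H : SimpleGraph V) (v : V) : ℕ :=
  (H.neighborSet v).ncard

/-- The maximum degree. -/
noncomputable def maxDeg {V : Type*} (H : SimpleGraph V) : ℕ :=
  sSup {d | ∃ v : V, vdeg H v = d}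

/-- The number of pendant neighbours of a vertex. -/
noncomputable def pendCount {V : Type*} (H : SimpleGraph V) (w : V) : ℕ :=
  {v ∈ H.neighborSet w | vdeg H v = 1}.ncard

/-!
Let `x` be a vertex at distance `5` from `u` and `c` a neighbour of `x`, so that `c` and `x` are
both at distance `≥ 4` from `u`. In the prism, `w̄` lies on a geodesic `ā - w̄ - b̄` whenever `ab` is
an edge of `T` and `w` is equal or adjacent to neither `a` nor `b`. Every vertex within distance `2`
of `u` is such a midpoint for the edge `cx`, every other vertex (in particular `c` and `x`) is one
for the edge `uv`; so the hull of `{ū, v̄}` contains `c̄, x̄` and then all of `V(T̄)`.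
-/

namespace SimpleGraph

variable {V : Type*}

lemma exists_dist_eq_of_graphEcc_eq {G : SimpleGraph V} {u : V} {n : ℕ}
    (h : graphEcc G u = n) (hn : n ≠ 0) : ∃ w, G.dist u w = n := by
  subst h
  -- in `ℕ`, `sSup` of an empty or unbounded set is `0`
  refine Nat.sSup_mem (s := {d | ∃ w, G.dist u w = d})
    (Set.nonempty_iff_ne_empty.2 fun he => hn ?_) (not_not.1 fun hb => hn ?_)
  · simp [graphEcc, he]
  · exact Nat.sSup_of_not_bddAbove hb

lemma edist_le_edist_add_one {G : SimpleGraph V} {a b w : V} (h : G.Adj a b) :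
    G.edist a w ≤ G.edist b w + 1 :=
  calc G.edist a w ≤ G.edist a b + G.edist b w := G.edist_triangle
    _ = G.edist b w + 1 := by rw [edist_eq_one_iff_adj.2 h, add_comm]

lemma compl_adj_of_two_le_edist {G : SimpleGraph V} {a b : V} (h : 2 ≤ G.edist a b) :
    Gᶜ.Adj a b := by
  refine (G.compl_adj a b).2 ⟨fun hab => ?_, fun hab => ?_⟩
  · simp [hab] at h
  · simp [edist_eq_one_iff_adj.2 hab] at h

lemma compl_adj_of_edist_le_of_add_one_lt_edist {G : SimpleGraph V} {u w c : V} {n : ℕ∞}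
    (hw : G.edist u w ≤ n) (hc : n + 1 < G.edist u c) : Gᶜ.Adj w c := by
  refine compl_adj_of_two_le_edist ?_
  have := G.edist_triangle (u := u) (v := w) (w := c)
  generalize G.edist u w = a at *
  generalize G.edist u c = b at *
  generalize G.edist w c = d at *
  enat_to_nat; omega

lemma inInterval_of_adj_of_adj {H : SimpleGraph V} {a w b : V} (haw : H.Adj a w)
    (hwb : H.Adj w b) (hab : a ≠ b) (hnab : ¬H.Adj a b) : inInterval H a b w := by
  let p : H.Walk a b := .cons haw (.cons hwb .nil)
  have hdist : H.dist a b = 2 := by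
    have hle : H.dist a b ≤ 2 := dist_le p
    have hne0 : H.dist a b ≠ 0 := (Reachable.pos_dist_of_ne ⟨p⟩ hab).ne'
    have hne1 : H.dist a b ≠ 1 := dist_eq_one_iff_adj.not.2 hnab
    omega
  exact ⟨p, p.isPath_of_length_eq_dist hdist.symm, hdist.symm, by simp [p]⟩

end SimpleGraph

section

variable {V : Type*}

lemma IsGeoConvex.inr_mem_of_compl_adj {G : SimpleGraph V} {C : Set (V ⊕ V)}
    (hC : IsGeoConvex (compPrism G) C) {a b w : V} (ha : Sum.inr a ∈ C) (hb : Sum.inr b ∈ C)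
    (hab : G.Adj a b) (haw : Gᶜ.Adj a w) (hwb : Gᶜ.Adj w b) : Sum.inr w ∈ C :=
  hC _ ha _ hb _ <| inInterval_of_adj_of_adj haw hwb (by simpa using hab.ne) fun h => h.2 hab

theorem range_inr_subset_geoHull_of_far_edge {G : SimpleGraph V} {u v c x : V}
    (huv : G.Adj u v) (hcx : G.Adj c x) (hc : 4 ≤ G.edist u c) (hx : 4 ≤ G.edist u x) :
    Set.range Sum.inr ⊆ geoHull (compPrism G) {Sum.inr u, Sum.inr v} := by
  rintro _ ⟨w, rfl⟩ C ⟨hC, huvC⟩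
  have huC : Sum.inr u ∈ C := huvC (by simp)
  have hvC : Sum.inr v ∈ C := huvC (by simp)
  have far : ∀ w, 2 < G.edist u w → Sum.inr w ∈ C := fun w hw =>
    hC.inr_mem_of_compl_adj huC hvC huv (compl_adj_of_two_le_edist hw.le)
      (compl_adj_of_edist_le_of_add_one_lt_edist (edist_eq_one_iff_adj.2 huv).le
        (by rwa [one_add_one_eq_two])).symm
  have near : ∀ w, G.edist u w ≤ 2 → Sum.inr w ∈ C := fun w hw =>
    have h24 : (2 : ℕ∞) < 4 := by norm_num
    have h34 : (2 + 1 : ℕ∞) < 4 := by norm_num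
    hC.inr_mem_of_compl_adj (far c (h24.trans_le hc)) (far x (h24.trans_le hx)) hcx
      (compl_adj_of_edist_le_of_add_one_lt_edist hw (h34.trans_le hc)).symm
      (compl_adj_of_edist_le_of_add_one_lt_edist hw (h34.trans_le hx))
  exact (le_or_gt (G.edist u w) 2).elim (near w) (far w)

end

theorem stmt4_general {V : Type*} (T : SimpleGraph V) (u v : V) (huv : T.Adj u v)
    (hper : graphEcc T u = 5) :
    Set.range Sum.inr ⊆ geoHull (compPrism T) {Sum.inr u, Sum.inr v} := by
  obtain ⟨x, hux⟩ := exists_dist_eq_of_graphEcc_eq hper (by norm_num)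
  have hedist : T.edist u x = 5 := (ENat.toNat_eq_iff (by norm_num)).1 hux
  obtain ⟨p, hp⟩ := exists_walk_of_edist_eq_coe hedist
  have hcx : T.Adj p.penultimate x := p.adj_penultimate (by simp [← Walk.length_eq_zero_iff, hp])
  have hc : 4 ≤ T.edist u p.penultimate := by
    have := edist_le_edist_add_one (w := u) hcx.symm
    rw [edist_comm, hedist, edist_comm] at this
    generalize T.edist u p.penultimate = a at *
    enat_to_nat; omega
  exact range_inr_subset_geoHull_of_far_edge huv hcx hc (by rw [hedist]; norm_num)

theorem stmt4 {V : Type*} [Fintype V] (T : SimpleGraph V) (hT : T.IsTree)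
    (hd : graphDiam T = 5) (u v : V) (huv : T.Adj u v) (hper : graphEcc T u = 5) :
    Set.range Sum.inr ⊆ geoHull (compPrism T) {Sum.inr u, Sum.inr v} :=
  stmt4_general T u v huv hper
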